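/- arXiv:1402.4028 — 6 statements merged into one kernel-verified Lean document; each statement's English description precedes it below -/
import Mathlib

section
/- Let ℓ₁, ℓ₂, ℓ₃ be three pairwise disjoint lines in PG(3,F) and let Q be the unique hyperbolic quadric containing them. Every plane of PG(3,F) that is not tangent to Q meets ℓ₁, ℓ₂, ℓ₃ in three non-collinear points. -/
/-!
Let `w` be the pole of the plane, so that the plane is `w^⊥`, and `B w w ≠ 0` because the plane
is not tangent. A totally isotropic line `m` of the nondegenerate 4-space satisfies `m = m^⊥`, so
it cannot lie in `w^⊥`: that would put `w` on `m`. Hence no `ℓᵢ` lies in the plane, and each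
meets it in a point `pᵢ`. If `p₃` were on the line `p₁p₂`, this line would carry three isotropic
points, hence be totally isotropic, while lying in the plane. The characteristic is not 2, since
otherwise `v ↦ B v v` would be additive and would vanish on `ℓ₁ ⊔ ℓ₂ = V ∋ w`.
-/

open Module Submodule LinearMap

namespace Submodule

variable {F V : Type*} [Field F] [AddCommGroup V] [Module F V] [FiniteDimensional F V]

theorem finrank_sup_of_disjoint {s t : Submodule F V} (h : Disjoint s t) :
    finrank F (s ⊔ t : Submodule F V) = finrank F s + finrank F t := by
  rw [← finrank_sup_add_finrank_inf_eq, h.eq_bot, finrank_bot, add_zero]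

theorem disjoint_of_not_le_of_finrank_eq_one {s t : Submodule F V} (hs : finrank F s = 1)
    (h : ¬s ≤ t) : Disjoint t s := by
  have hlt : finrank F (t ⊓ s : Submodule F V) < finrank F s :=
    finrank_lt_finrank_of_lt (inf_le_right.lt_of_ne fun he => h (he ▸ inf_le_left))
  rw [disjoint_iff, ← finrank_eq_zero]
  omega

theorem finrank_inf_eq_one_of_not_le {P ℓ : Submodule F V}
    (hP : finrank F P + 1 = finrank F V) (hℓ : finrank F ℓ = 2) (h : ¬ℓ ≤ P) :
    finrank F (P ⊓ ℓ : Submodule F V) = 1 := by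
  have hlt : finrank F (P ⊓ ℓ : Submodule F V) < finrank F ℓ :=
    finrank_lt_finrank_of_lt (inf_le_right.lt_of_ne fun he => h (he ▸ inf_le_left))
  have := finrank_sup_add_finrank_inf_eq P ℓ
  have := finrank_le (P ⊔ ℓ)
  omega

theorem finrank_sup_sup_eq_three {P₁ P₂ P₃ : Submodule F V} (hP₁ : finrank F P₁ = 1)
    (hP₂ : finrank F P₂ = 1) (hP₃ : finrank F P₃ = 1) (h12 : Disjoint P₁ P₂)
    (h : ¬P₃ ≤ P₁ ⊔ P₂) : finrank F (P₁ ⊔ P₂ ⊔ P₃ : Submodule F V) = 3 := by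
  rw [finrank_sup_of_disjoint (disjoint_of_not_le_of_finrank_eq_one hP₃ h),
    finrank_sup_of_disjoint h12, hP₁, hP₂, hP₃]

end Submodule

namespace LinearMap.BilinForm

variable {F V : Type*} [Field F] [AddCommGroup V] [Module F V] {B : LinearMap.BilinForm F V}

theorem IsSymm.apply_add_add (hB : B.IsSymm) (u v : V) :
    B (u + v) (u + v) = B u u + B v v + 2 * B u v := by
  simp only [map_add, LinearMap.add_apply, hB.eq v u]
  ring

theorem two_ne_zero_of_mem_sup (hB : B.IsSymm) {ℓ₁ ℓ₂ : Submodule F V}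
    (hq₁ : ∀ v ∈ ℓ₁, B v v = 0) (hq₂ : ∀ v ∈ ℓ₂, B v v = 0) {w : V} (hw : w ∈ ℓ₁ ⊔ ℓ₂)
    (hww : B w w ≠ 0) : (2 : F) ≠ 0 := by
  intro h2
  obtain ⟨a, ha, b, hb, rfl⟩ := mem_sup.mp hw
  rw [hB.apply_add_add, hq₁ a ha, hq₂ b hb, h2] at hww
  simp at hww

theorem apply_eq_zero_of_apply_add_add (hB : B.IsSymm) (h2 : (2 : F) ≠ 0) {u v : V}
    (hu : B u u = 0) (hv : B v v = 0) (huv : B (u + v) (u + v) = 0) : B u v = 0 := by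
  rw [hB.apply_add_add, hu, hv, zero_add, zero_add] at huv
  exact (mul_eq_zero.mp huv).resolve_left h2

theorem le_orthogonal_of_isotropic (hB : B.IsSymm) (h2 : (2 : F) ≠ 0) {ℓ : Submodule F V}
    (hq : ∀ v ∈ ℓ, B v v = 0) : ℓ ≤ B.orthogonal ℓ := fun u hu v hv =>
  apply_eq_zero_of_apply_add_add hB h2 (hq v hv) (hq u hu) (hq _ (add_mem hv hu))

theorem sup_le_orthogonal_sup (hB : B.IsSymm) (h2 : (2 : F) ≠ 0) {P₁ P₂ P₃ : Submodule F V}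
    (hP₁ : finrank F P₁ = 1) (hP₂ : finrank F P₂ = 1) (hP₃ : P₃ ≠ ⊥)
    (hq₁ : ∀ v ∈ P₁, B v v = 0) (hq₂ : ∀ v ∈ P₂, B v v = 0) (hq₃ : ∀ v ∈ P₃, B v v = 0)
    (h13 : Disjoint P₁ P₃) (h23 : Disjoint P₂ P₃) (h : P₃ ≤ P₁ ⊔ P₂) :
    P₁ ⊔ P₂ ≤ B.orthogonal (P₁ ⊔ P₂) := by
  obtain ⟨p, hp, hp0⟩ := exists_mem_ne_zero_of_ne_bot hP₃
  obtain ⟨u₁, hu₁, u₂, hu₂, rfl⟩ := mem_sup.mp (h hp)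
  have hu₁0 : u₁ ≠ 0 := by
    rintro rfl
    rw [zero_add] at hp hp0
    exact hp0 (disjoint_def.mp h23 u₂ hu₂ hp)
  have hu₂0 : u₂ ≠ 0 := by
    rintro rfl
    rw [add_zero] at hp hp0
    exact hp0 (disjoint_def.mp h13 u₁ hu₁ hp)
  have h12 : B u₁ u₂ = 0 :=
    apply_eq_zero_of_apply_add_add hB h2 (hq₁ u₁ hu₁) (hq₂ u₂ hu₂) (hq₃ _ hp)
  rw [eq_span_singleton_of_mem_of_finrank_eq_one hP₁ hu₁ hu₁0,
    eq_span_singleton_of_mem_of_finrank_eq_one hP₂ hu₂ hu₂0, ← span_insert]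
  refine le_orthogonal_of_isotropic hB h2 fun v hv => ?_
  obtain ⟨a, b, rfl⟩ := mem_span_pair.mp hv
  simp [hq₁ u₁ hu₁, hq₂ u₂ hu₂, h12, hB.eq u₂ u₁]

variable [FiniteDimensional F V]

theorem exists_ne_zero_eq_ker (hBnd : B.Nondegenerate) (hB : B.IsRefl) {P : Submodule F V}
    (hP : finrank F P + 1 = finrank F V) : ∃ w ≠ 0, P = ker (B w) := by
  have hPo : finrank F (B.orthogonal P) = 1 := by
    rw [finrank_orthogonal hBnd]
    omega
  obtain ⟨w, hw, hw0⟩ := exists_mem_ne_zero_of_ne_bot (one_le_finrank_iff.mp hPo.ge)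
  refine ⟨w, hw0, ?_⟩
  rw [← orthogonal_orthogonal hBnd hB P, eq_span_singleton_of_mem_of_finrank_eq_one hPo hw hw0,
    orthogonal_span_singleton_eq_toLin_ker]
  rfl

theorem apply_self_eq_zero_of_le_ker (hBnd : B.Nondegenerate) (hB : B.IsRefl)
    {m : Submodule F V} (hm : m ≤ B.orthogonal m) (hdim : 2 * finrank F m = finrank F V)
    {w : V} (hw : m ≤ ker (B w)) : B w w = 0 := by
  have hmo : B.orthogonal m = m :=
    (eq_of_le_of_finrank_le hm (by rw [finrank_orthogonal hBnd]; omega)).symm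
  have hwm : w ∈ m := hmo ▸ fun n hn => hB _ _ (hw hn)
  exact hm hwm w hwm

end LinearMap.BilinForm

open LinearMap.BilinForm

/-- Three pairwise skew lines in `PG(3,F)` lie on a (hyperbolic) quadric `Q`, given by a
symmetric nondegenerate bilinear form `B` (quadric = isotropic vectors of `B`).  Every
plane that is not a tangent plane of `Q` meets the three lines in three non-collinear
points. -/
theorem plane_not_tangent_meets_noncollinear (F : Type*) [Field F]
    (B : LinearMap.BilinForm F (Fin 4 → F))
    (hBsymm : ∀ v w, B v w = B w v) (hBnd : B.Nondegenerate)
    (ℓ₁ ℓ₂ ℓ₃ : Submodule F (Fin 4 → F))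
    (h₁ : Module.finrank F ℓ₁ = 2) (h₂ : Module.finrank F ℓ₂ = 2)
    (h₃ : Module.finrank F ℓ₃ = 2)
    (h12 : ℓ₁ ⊓ ℓ₂ = ⊥) (h13 : ℓ₁ ⊓ ℓ₃ = ⊥) (h23 : ℓ₂ ⊓ ℓ₃ = ⊥)
    (hq₁ : ∀ v ∈ ℓ₁, B v v = 0) (hq₂ : ∀ v ∈ ℓ₂, B v v = 0) (hq₃ : ∀ v ∈ ℓ₃, B v v = 0)
    (Pl : Submodule F (Fin 4 → F)) (hPl : Module.finrank F Pl = 3)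
    (htangent : ¬ ∃ v : Fin 4 → F, v ≠ 0 ∧ B v v = 0 ∧ Pl = LinearMap.ker (B v)) :
    Module.finrank F ((Pl ⊓ ℓ₁) ⊔ (Pl ⊓ ℓ₂) ⊔ (Pl ⊓ ℓ₃) : Submodule F (Fin 4 → F)) = 3 := by
  have hB : B.IsSymm := ⟨hBsymm⟩
  have hV : finrank F (Fin 4 → F) = 4 := finrank_fin_fun F
  obtain ⟨w, hw0, rfl⟩ := exists_ne_zero_eq_ker hBnd hB.isRefl (P := Pl) (by omega)
  have hww : B w w ≠ 0 := fun h => htangent ⟨w, hw0, h, rfl⟩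
  have h2 : (2 : F) ≠ 0 := two_ne_zero_of_mem_sup hB hq₁ hq₂
    (by rw [eq_top_of_disjoint ℓ₁ ℓ₂ (by omega) (disjoint_iff.mpr h12)]; trivial) hww
  have hpoint : ∀ ℓ : Submodule F (Fin 4 → F), finrank F ℓ = 2 → (∀ v ∈ ℓ, B v v = 0) →
      finrank F (ker (B w) ⊓ ℓ : Submodule F (Fin 4 → F)) = 1 := fun ℓ hℓ hq =>
    finrank_inf_eq_one_of_not_le (by omega) hℓ fun hle =>
      hww (apply_self_eq_zero_of_le_ker hBnd hB.isRefl (le_orthogonal_of_isotropic hB h2 hq)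
        (by omega) hle)
  have hP₁ := hpoint ℓ₁ h₁ hq₁
  have hP₂ := hpoint ℓ₂ h₂ hq₂
  have hP₃ := hpoint ℓ₃ h₃ hq₃
  have hdisj : ∀ {ℓ ℓ' : Submodule F (Fin 4 → F)}, ℓ ⊓ ℓ' = ⊥ →
      Disjoint (ker (B w) ⊓ ℓ) (ker (B w) ⊓ ℓ') := fun h =>
    (disjoint_iff.mpr h).mono inf_le_right inf_le_right
  refine finrank_sup_sup_eq_three hP₁ hP₂ hP₃ (hdisj h12) fun hcol => hww ?_
  exact apply_self_eq_zero_of_le_ker hBnd hB.isRefl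
    (sup_le_orthogonal_sup hB h2 hP₁ hP₂ (one_le_finrank_iff.mp hP₃.ge)
      (fun v hv => hq₁ v hv.2) (fun v hv => hq₂ v hv.2) (fun v hv => hq₃ v hv.2)
      (hdisj h13) (hdisj h23) hcol)
    (by rw [finrank_sup_of_disjoint (hdisj h12), hP₁, hP₂, hV]) (sup_le inf_le_left inf_le_left)
end

section
/- Let ℓ₁, ℓ₂, ℓ₃ be three pairwise skew lines in PG(3,F) lying on a hyperbolic quadric Q, and suppose ℓ₄ is a line disjoint from Q. Then {ℓ₁, ℓ₂, ℓ₃, ℓ₄} is a generator set with respect to planes: every plane Π of PG(3,F) meets the union of these lines in a set of points spanning Π. -/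
/-!
A plane `Π` meets every line, so it contains points `pᵢ ∈ ℓᵢ`, and `p₁ ≠ p₂` because `ℓ₁, ℓ₂`
are skew. If the intersection points did not span `Π`, they would all lie on the line `p₁p₂`.
That line then carries the three distinct points `p₁, p₂, p₃` of `Q`; a quadratic form on a
projective line vanishing at three points vanishes identically, so `p₁p₂ ⊆ Q`, contradicting
`p₄ ∈ p₁p₂` and `ℓ₄ ∩ Q = ∅`.
-/

open Module Submodule

theorem Submodule.exists_mem_inf_ne_zero_of_finrank_lt {K V : Type*} [Field K] [AddCommGroup V]
    [Module K V] [FiniteDimensional K V] {p q : Submodule K V}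
    (h : finrank K V < finrank K p + finrank K q) : ∃ v ∈ p, v ∈ q ∧ v ≠ 0 := by
  by_contra! hpq
  exact h.not_ge (finrank_add_finrank_le_of_disjoint (disjoint_def.2 hpq))

theorem Submodule.finrank_span_pair_of_disjoint {K V : Type*} [Field K] [AddCommGroup V]
    [Module K V] {p q : Submodule K V} (hpq : Disjoint p q) {x y : V} (hx : x ∈ p) (hy : y ∈ q)
    (hx0 : x ≠ 0) (hy0 : y ≠ 0) : finrank K (span K {x, y}) = 2 := by
  have hxy : K ∙ x ⊓ K ∙ y = ⊥ :=
    (hpq.mono ((span_singleton_le_iff_mem _ _).2 hx) ((span_singleton_le_iff_mem _ _).2 hy)).eq_bot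
  have := finrank_sup_add_finrank_inf_eq (K ∙ x) (K ∙ y)
  rw [hxy, finrank_bot, finrank_span_singleton hx0, finrank_span_singleton hy0] at this
  rw [span_insert]
  omega

theorem LinearMap.BilinForm.apply_smul_add_smul_self {R M : Type*} [CommRing R] [AddCommGroup M]
    [Module R M] (B : LinearMap.BilinForm R M) {x y : M} (hx : B x x = 0) (hy : B y y = 0)
    (a b : R) : B (a • x + b • y) (a • x + b • y) = a * b * (B x y + B y x) := by
  simp only [map_add, map_smul, LinearMap.add_apply, LinearMap.smul_apply, smul_eq_mul, hx, hy]
  ring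

theorem LinearMap.BilinForm.apply_self_eq_zero_of_mem_span_pair {R M : Type*} [CommRing R]
    [NoZeroDivisors R] [AddCommGroup M] [Module R M] (B : LinearMap.BilinForm R M) {x y : M}
    (hx : B x x = 0) (hy : B y y = 0) {a b : R} (ha : a ≠ 0) (hb : b ≠ 0)
    (hab : B (a • x + b • y) (a • x + b • y) = 0) : ∀ w ∈ span R {x, y}, B w w = 0 := by
  have hpolar : B x y + B y x = 0 := by
    rw [B.apply_smul_add_smul_self hx hy] at hab
    exact (mul_eq_zero.1 hab).resolve_left (mul_ne_zero ha hb)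
  intro w hw
  obtain ⟨c, d, rfl⟩ := mem_span_pair.1 hw
  rw [B.apply_smul_add_smul_self hx hy, hpolar, mul_zero]

theorem four_lines_generator_PG3_general (F : Type*) [Field F]
    (B : LinearMap.BilinForm F (Fin 4 → F))
    (ℓ₁ ℓ₂ ℓ₃ ℓ₄ : Submodule F (Fin 4 → F))
    (h₁ : Module.finrank F ℓ₁ = 2) (h₂ : Module.finrank F ℓ₂ = 2)
    (h₃ : Module.finrank F ℓ₃ = 2) (h₄ : Module.finrank F ℓ₄ = 2)
    (h12 : ℓ₁ ⊓ ℓ₂ = ⊥) (h13 : ℓ₁ ⊓ ℓ₃ = ⊥) (h23 : ℓ₂ ⊓ ℓ₃ = ⊥)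
    (hq₁ : ∀ v ∈ ℓ₁, B v v = 0) (hq₂ : ∀ v ∈ ℓ₂, B v v = 0) (hq₃ : ∀ v ∈ ℓ₃, B v v = 0)
    (hq₄ : ∀ v ∈ ℓ₄, v ≠ 0 → B v v ≠ 0) :
    ∀ Pl : Submodule F (Fin 4 → F), Module.finrank F Pl = 3 →
      Submodule.span F
        (((ℓ₁ : Set (Fin 4 → F)) ∪ (ℓ₂ : Set (Fin 4 → F)) ∪ (ℓ₃ : Set (Fin 4 → F)) ∪
          (ℓ₄ : Set (Fin 4 → F))) ∩ (Pl : Set (Fin 4 → F))) = Pl := by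
  intro Pl hPl
  set S := span F ((ℓ₁ ∪ ℓ₂ ∪ ℓ₃ ∪ ℓ₄ : Set (Fin 4 → F)) ∩ Pl)
  have hmem : ∀ v ∈ Pl, v ∈ ℓ₁ ∨ v ∈ ℓ₂ ∨ v ∈ ℓ₃ ∨ v ∈ ℓ₄ → v ∈ S := fun v hvP hv ↦
    subset_span ⟨by simp only [Set.mem_union, SetLike.mem_coe]; tauto, hvP⟩
  have hmeet : ∀ ℓ : Submodule F (Fin 4 → F), finrank F ℓ = 2 → ∃ v ∈ ℓ, v ∈ Pl ∧ v ≠ 0 :=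
    fun ℓ hℓ ↦ exists_mem_inf_ne_zero_of_finrank_lt (by rw [finrank_fin_fun]; omega)
  obtain ⟨v₁, hv₁, hv₁P, hv₁0⟩ := hmeet ℓ₁ h₁
  obtain ⟨v₂, hv₂, hv₂P, hv₂0⟩ := hmeet ℓ₂ h₂
  obtain ⟨v₃, hv₃, hv₃P, hv₃0⟩ := hmeet ℓ₃ h₃
  obtain ⟨v₄, hv₄, hv₄P, hv₄0⟩ := hmeet ℓ₄ h₄
  refine eq_of_le_of_finrank_le (span_le.2 fun _ hv ↦ hv.2) (not_lt.1 fun hS ↦ ?_)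
  have hspan : span F {v₁, v₂} = S := eq_of_le_of_finrank_le
    (span_le.2 (Set.pair_subset (hmem v₁ hv₁P (by tauto)) (hmem v₂ hv₂P (by tauto))))
    (by rw [finrank_span_pair_of_disjoint (disjoint_iff.2 h12) hv₁ hv₂ hv₁0 hv₂0]; omega)
  obtain ⟨a, b, rfl⟩ := mem_span_pair.1 (hspan ▸ hmem v₃ hv₃P (by tauto))
  have ha : a ≠ 0 := by
    rintro rfl
    rw [zero_smul, zero_add] at hv₃ hv₃0
    exact hv₃0 (disjoint_def.1 (disjoint_iff.2 h23) _ (smul_mem _ b hv₂) hv₃)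
  have hb : b ≠ 0 := by
    rintro rfl
    rw [zero_smul, add_zero] at hv₃ hv₃0
    exact hv₃0 (disjoint_def.1 (disjoint_iff.2 h13) _ (smul_mem _ a hv₁) hv₃)
  have hisotropic := B.apply_self_eq_zero_of_mem_span_pair (hq₁ v₁ hv₁) (hq₂ v₂ hv₂) ha hb
    (hq₃ _ hv₃)
  exact hq₄ v₄ hv₄ hv₄0 (hisotropic v₄ (hspan ▸ hmem v₄ hv₄P (by tauto)))

/-- If `ℓ₁, ℓ₂, ℓ₃` are pairwise skew lines on a hyperbolic quadric `Q` of `PG(3,F)`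
(the isotropic vectors of a symmetric nondegenerate bilinear form `B`), and `ℓ₄` is a
line disjoint from `Q`, then `{ℓ₁,ℓ₂,ℓ₃,ℓ₄}` is a generator set with respect to planes:
every plane is spanned by its intersection with the union of the four lines. -/
theorem four_lines_generator_PG3 (F : Type*) [Field F]
    (B : LinearMap.BilinForm F (Fin 4 → F))
    (hBsymm : ∀ v w, B v w = B w v) (hBnd : B.Nondegenerate)
    (ℓ₁ ℓ₂ ℓ₃ ℓ₄ : Submodule F (Fin 4 → F))
    (h₁ : Module.finrank F ℓ₁ = 2) (h₂ : Module.finrank F ℓ₂ = 2)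
    (h₃ : Module.finrank F ℓ₃ = 2) (h₄ : Module.finrank F ℓ₄ = 2)
    (h12 : ℓ₁ ⊓ ℓ₂ = ⊥) (h13 : ℓ₁ ⊓ ℓ₃ = ⊥) (h23 : ℓ₂ ⊓ ℓ₃ = ⊥)
    (hq₁ : ∀ v ∈ ℓ₁, B v v = 0) (hq₂ : ∀ v ∈ ℓ₂, B v v = 0) (hq₃ : ∀ v ∈ ℓ₃, B v v = 0)
    (hq₄ : ∀ v ∈ ℓ₄, v ≠ 0 → B v v ≠ 0) :
    ∀ Pl : Submodule F (Fin 4 → F), Module.finrank F Pl = 3 →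
      Submodule.span F
        (((ℓ₁ : Set (Fin 4 → F)) ∪ (ℓ₂ : Set (Fin 4 → F)) ∪ (ℓ₃ : Set (Fin 4 → F)) ∪
          (ℓ₄ : Set (Fin 4 → F))) ∩ (Pl : Set (Fin 4 → F))) = Pl :=
  four_lines_generator_PG3_general F B ℓ₁ ℓ₂ ℓ₃ ℓ₄ h₁ h₂ h₃ h₄ h12 h13 h23 hq₁ hq₂ hq₃ hq₄
end

section
/- (Sufficient condition) Let L be a set of lines in PG(d,F). If no projective subspace of codimension two meets every line in L, then L is a generator set with respect to hyperplanes: for every hyperplane Π, the union of intersections of Π with the lines of L spans Π. -/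
open Module Submodule

lemma exists_superset_finrank_eq {F V : Type*} [Field F] [AddCommGroup V] [Module F V]
    [FiniteDimensional F V] (k : ℕ) (N : Submodule F V)
    (h1 : finrank F N ≤ k) (h2 : k ≤ finrank F V) :
    ∃ W : Submodule F V, N ≤ W ∧ finrank F W = k := by
  obtain ⟨n, hn⟩ : ∃ n, k - finrank F N = n := ⟨_, rfl⟩
  induction n generalizing N with
  | zero =>
    exact ⟨N, le_rfl, le_antisymm h1 (by omega)⟩
  | succ n ih =>
    have hlt : finrank F N < k := by omega
    obtain ⟨m, hm⟩ := N.exists_of_finrank_lt (lt_of_lt_of_le hlt h2)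
    have hmN : m ∉ N := fun h => hm 1 one_ne_zero (by simpa using h)
    have hm0 : m ≠ 0 := fun h => hmN (h ▸ N.zero_mem)
    have hdis : N ⊓ (Submodule.span F {m}) = ⊥ := by
      rw [eq_bot_iff]
      rintro x ⟨hx1, hx2⟩
      obtain ⟨r, rfl⟩ := Submodule.mem_span_singleton.mp hx2
      rcases eq_or_ne r 0 with rfl | hr
      · simp
      · exact absurd hx1 (hm r hr)
    have hrank : finrank F ↥(N ⊔ Submodule.span F {m}) = finrank F N + 1 := by
      have := Submodule.finrank_sup_add_finrank_inf_eq N (Submodule.span F {m})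
      rw [hdis, finrank_bot, finrank_span_singleton hm0] at this
      omega
    obtain ⟨W, hW1, hW2⟩ := ih (N ⊔ Submodule.span F {m}) (by omega) (by omega)
    exact ⟨W, le_trans le_sup_left hW1, hW2⟩

/-- Sufficient condition: if no codimension-two subspace of `PG(d,F)` meets every line
of `L`, then `L` is a generator set with respect to hyperplanes: every hyperplane is
spanned by its intersections with the lines of `L`. -/
theorem no_transversal_implies_generator (F : Type*) [Field F] (d : ℕ)
    (L : Set (Submodule F (Fin (d + 1) → F)))
    (hL : ∀ ℓ ∈ L, Module.finrank F ℓ = 2)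
    (hno : ¬ ∃ H : Submodule F (Fin (d + 1) → F),
      Module.finrank F H = d - 1 ∧ ∀ ℓ ∈ L, ℓ ⊓ H ≠ ⊥) :
    ∀ Pl : Submodule F (Fin (d + 1) → F), Module.finrank F Pl = d →
      Submodule.span F (⋃ ℓ ∈ L, ((ℓ : Set (Fin (d + 1) → F)) ∩ (Pl : Set (Fin (d + 1) → F)))) = Pl := by
  intro Pl hPl
  have hamb : finrank F (Fin (d + 1) → F) = d + 1 := by
    simp [Module.finrank_pi]
  set S := Submodule.span F (⋃ ℓ ∈ L, ((ℓ : Set (Fin (d + 1) → F)) ∩ (Pl : Set (Fin (d + 1) → F)))) with hS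
  have hSle : S ≤ Pl := by
    rw [hS, Submodule.span_le]
    intro x hx
    simp only [Set.mem_iUnion, Set.mem_inter_iff] at hx
    obtain ⟨ℓ, _, _, hx2⟩ := hx
    exact hx2
  by_contra hne
  have hlt : S < Pl := lt_of_le_of_ne hSle hne
  have hSrank : finrank F S < d := by
    have h := Submodule.finrank_lt_finrank_of_lt hlt
    rwa [hPl] at h
  obtain ⟨W, hSW, hWrank⟩ := exists_superset_finrank_eq (d - 1) S (by omega) (by omega)
  refine hno ⟨W, hWrank, fun ℓ hℓ => ?_⟩
  -- ℓ ⊓ Pl ≠ ⊥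
  have hinf : ℓ ⊓ Pl ≠ ⊥ := by
    intro hbot
    have hsum := Submodule.finrank_sup_add_finrank_inf_eq ℓ Pl
    rw [hbot, finrank_bot, hL ℓ hℓ, hPl] at hsum
    have hle : finrank F ↥(ℓ ⊔ Pl) ≤ d + 1 := by
      have h := Submodule.finrank_le (ℓ ⊔ Pl)
      rwa [hamb] at h
    omega
  -- ℓ ⊓ Pl ≤ S
  have hsub : ℓ ⊓ Pl ≤ S := by
    intro x hx
    apply Submodule.subset_span
    simp only [Set.mem_iUnion, Set.mem_inter_iff]
    exact ⟨ℓ, hℓ, hx.1, hx.2⟩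
  have : ℓ ⊓ Pl ≤ ℓ ⊓ W := le_inf inf_le_left (le_trans hsub hSW)
  intro hbot
  exact hinf (eq_bot_iff.mpr (hbot ▸ this))
end

section
/- If a set L of lines in PG(d,F) has at most ⌊d/2⌋ + d − 1 elements, then there exists a projective subspace H of codimension two meeting every line in L. -/
open Module Submodule

/-- Between a submodule `N` and a submodule `P` containing it, there is a submodule of any
intermediate finrank. -/
lemma exists_intermediate_submodule {K V : Type*} [Field K] [AddCommGroup V] [Module K V]
    [FiniteDimensional K V] (k : ℕ) :
    ∀ n (N P : Submodule K V), N ≤ P → finrank K N + n = k → k ≤ finrank K P →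
      ∃ H : Submodule K V, N ≤ H ∧ H ≤ P ∧ finrank K H = k := by
  intro n
  induction n with
  | zero =>
    intro N P hNP hk _
    exact ⟨N, le_rfl, hNP, by omega⟩
  | succ n ih =>
    intro N P hNP hk hkP
    have hlt : finrank K N < finrank K P := by omega
    have hns : ¬ P ≤ N := fun h => absurd (Submodule.finrank_mono h) (by omega)
    obtain ⟨v, hvP, hvN⟩ : ∃ v, v ∈ P ∧ v ∉ N := by
      by_contra h
      push_neg at h
      exact hns fun x hx => h x hx
    have hv0 : v ≠ 0 := fun h => hvN (h ▸ N.zero_mem)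
    have hdisj : Disjoint N (K ∙ v) := (Submodule.disjoint_span_singleton' hv0).mpr hvN
    have hsup : finrank K ↥(N ⊔ K ∙ v) = finrank K N + 1 := by
      have := Submodule.finrank_sup_add_finrank_inf_eq N (K ∙ v)
      rw [hdisj.eq_bot, finrank_bot, finrank_span_singleton hv0] at this
      omega
    have hle : N ⊔ (K ∙ v) ≤ P := sup_le hNP ((Submodule.span_singleton_le_iff_mem v P).mpr hvP)
    obtain ⟨H, h1, h2, h3⟩ := ih (N ⊔ K ∙ v) P hle (by omega) hkP
    exact ⟨H, le_trans le_sup_left h1, h2, h3⟩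

/-- The span of a finite family of planes has finrank at most twice the number of planes. -/
lemma finrank_finset_sup_le_two_mul {K V : Type*} [Field K] [AddCommGroup V] [Module K V]
    [FiniteDimensional K V] (A : Finset (Submodule K V)) (h : ∀ ℓ ∈ A, finrank K ℓ = 2) :
    finrank K ↥(A.sup id) ≤ 2 * A.card := by
  classical
  induction A using Finset.induction with
  | empty => simp
  | @insert x s hx ih =>
    have hins := h
    rw [Finset.sup_insert]
    have h1 : finrank K ↥(id x ⊔ s.sup id) ≤ finrank K ↥x + finrank K ↥(s.sup id) := by
      have := Submodule.finrank_sup_add_finrank_inf_eq x (s.sup id)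
      simp only [id] at *
      omega
    have h2 := ih fun ℓ hℓ => hins ℓ (Finset.mem_insert_of_mem hℓ)
    have h3 := hins x (Finset.mem_insert_self x s)
    rw [Finset.card_insert_of_notMem hx]
    simp only [id] at *
    omega

/-- If a set of lines in `PG(d,F)` has at most `⌊d/2⌋ + d - 1` elements, then some
codimension-two subspace meets every one of them. -/
theorem few_lines_have_transversal (F : Type*) [Field F] (d : ℕ)
    (L : Finset (Submodule F (Fin (d + 1) → F)))
    (hL : ∀ ℓ ∈ L, Module.finrank F ℓ = 2)
    (hcard : L.card ≤ d / 2 + d - 1) :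
    ∃ H : Submodule F (Fin (d + 1) → F),
      Module.finrank F H = d - 1 ∧ ∀ ℓ ∈ L, ℓ ⊓ H ≠ ⊥ := by
  classical
  have hV : finrank F (Fin (d + 1) → F) = d + 1 := by
    simp [Module.finrank_fin_fun]
  have hc : L.card ≤ d / 2 + d - 1 := hcard
  -- every line forces d ≥ 1
  have hdim : ∀ ℓ ∈ L, 2 ≤ d + 1 := by
    intro ℓ hℓ
    have := Submodule.finrank_le ℓ
    rw [hL ℓ hℓ, hV] at this
    omega
  -- choose a subset A of at most ⌊d/2⌋ lines
  obtain ⟨A, hAL, hA⟩ := Finset.exists_subset_card_eq (min_le_left L.card (d / 2))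
  set B := L \ A with hB
  have hABcard : B.card = L.card - A.card := Finset.card_sdiff_of_subset hAL
  have hAcard : A.card = min L.card (d / 2) := hA
  have hBcard : B.card ≤ d - 1 := by omega
  -- W = span of the lines of A
  set W := A.sup id with hW
  have hWrank : finrank F ↥W ≤ d := by
    have h1 : finrank F ↥W ≤ 2 * A.card :=
      finrank_finset_sup_le_two_mul A (fun ℓ hℓ => hL ℓ (hAL hℓ))
    omega
  have htop : finrank F ↥(⊤ : Submodule F (Fin (d + 1) → F)) = d + 1 := by
    rw [finrank_top]; exact hV
  -- extend W to a hyperplane P of dimension d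
  obtain ⟨P, hWP, -, hPrank⟩ :=
    exists_intermediate_submodule (K := F) d (d - finrank F ↥W) W ⊤ le_top
      (by omega) (by omega)
  -- every line meets P nontrivially
  have hmeet : ∀ ℓ ∈ L, ∃ v, v ∈ ℓ ⊓ P ∧ v ≠ 0 := by
    intro ℓ hℓ
    have hsum := Submodule.finrank_sup_add_finrank_inf_eq ℓ P
    have hsle := Submodule.finrank_le (ℓ ⊔ P)
    rw [hV] at hsle
    have hpos : 0 < finrank F ↥(ℓ ⊓ P) := by
      rw [hL ℓ hℓ, hPrank] at hsum
      have := hdim ℓ hℓ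
      omega
    have hne : ℓ ⊓ P ≠ ⊥ := by
      intro h
      rw [h, finrank_bot] at hpos
      omega
    obtain ⟨v, hv, hv0⟩ := Submodule.ne_bot_iff _ |>.mp hne
    exact ⟨v, hv, hv0⟩
  choose! p hp hp0 using hmeet
  -- span of the chosen points of the lines of B
  set Q := Submodule.span F ((B.image p : Finset (Fin (d + 1) → F)) : Set (Fin (d + 1) → F))
    with hQ
  have hQP : Q ≤ P := by
    rw [hQ, Submodule.span_le]
    intro x hx
    simp only [Finset.coe_image, Set.mem_image, Finset.mem_coe] at hx
    obtain ⟨ℓ, hℓ, rfl⟩ := hx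
    have hℓL : ℓ ∈ L := (Finset.mem_sdiff.mp hℓ).1
    exact (Submodule.mem_inf.mp (hp ℓ hℓL)).2
  have hQrank : finrank F ↥Q ≤ d - 1 := by
    have h1 : finrank F ↥Q ≤ (B.image p).card := finrank_span_finset_le_card _
    have h2 : (B.image p).card ≤ B.card := Finset.card_image_le
    omega
  -- the transversal subspace H
  obtain ⟨H, hQH, hHP, hHrank⟩ :=
    exists_intermediate_submodule (K := F) (d - 1) (d - 1 - finrank F ↥Q) Q P hQP
      (by omega) (by omega)
  refine ⟨H, hHrank, fun ℓ hℓ => ?_⟩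
  by_cases hℓA : ℓ ∈ A
  · -- ℓ lies in P, and H is a hyperplane of P
    have hd1 : 2 ≤ d + 1 := hdim ℓ hℓ
    have hℓP : ℓ ≤ P := le_trans (Finset.le_sup (f := id) hℓA) hWP
    have hsum := Submodule.finrank_sup_add_finrank_inf_eq ℓ H
    have hsle : finrank F ↥(ℓ ⊔ H) ≤ d :=
      (Submodule.finrank_mono (sup_le hℓP hHP)).trans hPrank.le
    have hpos : 0 < finrank F ↥(ℓ ⊓ H) := by
      rw [hL ℓ hℓ, hHrank] at hsum
      omega
    intro hbot
    rw [hbot, finrank_bot] at hpos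
    omega
  · -- ℓ ∈ B, and its chosen point lies in H
    have hℓB : ℓ ∈ B := Finset.mem_sdiff.mpr ⟨hℓ, hℓA⟩
    have hpH : p ℓ ∈ H := hQH <| Submodule.subset_span <| by
      simp only [Finset.coe_image, Set.mem_image, Finset.mem_coe]
      exact ⟨ℓ, hℓB, rfl⟩
    have hpℓ : p ℓ ∈ ℓ := (Submodule.mem_inf.mp (hp ℓ hℓ)).1
    intro hbot
    refine hp0 ℓ hℓ ?_
    have hmem : p ℓ ∈ ℓ ⊓ H := Submodule.mem_inf.mpr ⟨hpℓ, hpH⟩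
    rw [hbot] at hmem
    simpa using hmem
end

section
/- (Lower bound) If the field F has at least ⌊d/2⌋ + d elements, then any generator set of lines with respect to hyperplanes in PG(d,F) contains at least ⌊d/2⌋ + d lines. -/
/-!
If `L` has fewer than `⌊d/2⌋ + d` lines, some codimension-two subspace `W = ker f ⊓ ker g` meets
all of them: `f` vanishes on `|L| + 1 - d ≤ ⌊d/2⌋` of the lines, every other line meets `ker f`
in a point, and a functional `g` independent of `f` can still vanish on these at most `d - 1`
points. Each hyperplane `ker (f + a • g)` of the pencil through `W` then contains a line of `L`
not contained in `W`, because a line not contained in the hyperplane meets it only in its point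
of `W`. Two hyperplanes of the pencil meet in `W`, so these lines are distinct and
`|F| ≤ |L|`, contradicting `⌊d/2⌋ + d ≤ |F|`.
-/

open Module Submodule
open LinearMap (ker)

universe u v

variable {F : Type v} {V : Type u} [Field F] [AddCommGroup V] [Module F V]

def IsHyperplaneGenerating (L : Set (Submodule F V)) : Prop :=
  ∀ P : Submodule F V, finrank F P + 1 = finrank F V →
    span F (⋃ ℓ ∈ L, (ℓ : Set V) ∩ P) = P

theorem inf_ker_ne_bot_of_one_lt_finrank {U : Submodule F V} (hU : 1 < finrank F U)
    (φ : Dual F V) : U ⊓ ker φ ≠ ⊥ := by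
  intro h
  have hinj : Function.Injective (φ.domRestrict U) :=
    LinearMap.injective_domRestrict_iff.mpr (disjoint_iff.mpr h)
  have := LinearMap.finrank_le_finrank_of_injective hinj
  rw [finrank_self] at this
  omega

section Pencil

variable {f g : Dual F V}

theorem ker_add_smul_inf_ker_add_smul_le {a b : F} (hab : a ≠ b) :
    ker (f + a • g) ⊓ ker (f + b • g) ≤ ker f ⊓ ker g := by
  rintro x ⟨ha, hb⟩
  simp only [SetLike.mem_coe, LinearMap.mem_ker, LinearMap.add_apply, LinearMap.smul_apply,
    smul_eq_mul] at ha hb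
  have hg : g x = 0 := by
    have : (a - b) * g x = 0 := by linear_combination ha - hb
    exact (mul_eq_zero.mp this).resolve_left (sub_ne_zero.mpr hab)
  exact ⟨by simpa [hg] using ha, hg⟩

theorem ker_inf_ker_le_ker_add_smul (a : F) : ker f ⊓ ker g ≤ ker (f + a • g) := by
  rintro x ⟨hf, hg⟩
  simp_all

variable (hfg : LinearIndependent F ![f, g])
include hfg

theorem add_smul_ne_zero (a : F) : f + a • g ≠ 0 := fun h =>
  one_ne_zero (LinearIndependent.pair_iff.mp hfg 1 a (by simpa using h)).1

theorem not_ker_add_smul_le (a : F) : ¬ ker (f + a • g) ≤ ker f ⊓ ker g := by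
  intro h
  have hg : g ∈ span F (Set.range fun _ : Unit => f + a • g) :=
    mem_span_of_iInf_ker_le_ker (by simpa using h.trans inf_le_right)
  obtain ⟨c, hc⟩ := mem_span_singleton.mp (by simpa using hg)
  obtain ⟨rfl, h⟩ := LinearIndependent.pair_iff.mp hfg c (c * a - 1) (by
    linear_combination (norm := module) hc)
  simp at h

end Pencil

section FiniteDimensional

variable [FiniteDimensional F V]

theorem finrank_finset_sup_le_sum (A : Finset (Submodule F V)) :
    finrank F (A.sup id : Submodule F V) ≤ ∑ ℓ ∈ A, finrank F ℓ := by
  classical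
  induction A using Finset.induction_on with
  | empty => simp
  | insert ℓ A hℓ ih =>
    rw [Finset.sup_insert, Finset.sum_insert hℓ]
    exact (finrank_add_le_finrank_add_finrank _ _).trans (by simpa using ih)

theorem exists_ne_zero_forall_le_ker {A : Finset (Submodule F V)}
    (hA : ∑ ℓ ∈ A, finrank F ℓ < finrank F V) : ∃ f : Dual F V, f ≠ 0 ∧ ∀ ℓ ∈ A, ℓ ≤ ker f := by
  have hlt : A.sup id < ⊤ :=
    lt_top_of_finrank_lt_finrank ((finrank_finset_sup_le_sum A).trans_lt hA)
  obtain ⟨f, hf, hle⟩ := exists_le_ker_of_lt_top _ hlt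
  exact ⟨f, hf, fun ℓ hℓ => (Finset.le_sup (f := id) hℓ).trans hle⟩

theorem exists_linearIndependent_pair_forall_apply_eq_zero {f : Dual F V} (hf : f ≠ 0)
    {S : Finset V} (hS : S.card + 2 ≤ finrank F V) :
    ∃ g : Dual F V, LinearIndependent F ![f, g] ∧ ∀ w ∈ S, g w = 0 := by
  have hK : 2 ≤ finrank F (span F (S : Set V)).dualAnnihilator := by
    have := Subspace.finrank_add_finrank_dualAnnihilator_eq (span F (S : Set V))
    have : finrank F (span F (S : Set V)) ≤ S.card := finrank_span_finset_le_card S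
    omega
  obtain ⟨g, hgK, hgf⟩ : ∃ g ∈ (span F (S : Set V)).dualAnnihilator, g ∉ F ∙ f := by
    by_contra! h
    have := finrank_mono h
    rw [finrank_span_singleton hf] at this
    omega
  refine ⟨g, (LinearIndependent.pair_iff' hf).mpr fun a ha => hgf ?_, fun w hw => ?_⟩
  · exact mem_span_singleton.mpr ⟨a, ha⟩
  · exact (mem_dualAnnihilator g).mp hgK w (subset_span hw)

theorem exists_linearIndependent_pair_forall_inf_ne_bot {L : Finset (Submodule F V)} {d : ℕ}
    (hV : finrank F V = d + 1) (hL : ∀ ℓ ∈ L, finrank F ℓ = 2) (hcard : L.card < d / 2 + d) :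
    ∃ f g : Dual F V, LinearIndependent F ![f, g] ∧ ∀ ℓ ∈ L, ℓ ⊓ (ker f ⊓ ker g) ≠ ⊥ := by
  classical
  obtain ⟨A, hAL, hAcard⟩ := Finset.exists_subset_card_eq (s := L) (n := L.card + 1 - d) (by omega)
  obtain ⟨f, hf, hAf⟩ := exists_ne_zero_forall_le_ker (A := A) (by
    rw [Finset.sum_congr rfl fun ℓ hℓ => hL ℓ (hAL hℓ), Finset.sum_const, smul_eq_mul]
    omega)
  have hw : ∀ ℓ ∈ L \ A, ∃ w ∈ ℓ ⊓ ker f, w ≠ 0 := fun ℓ hℓ =>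
    exists_mem_ne_zero_of_ne_bot <| inf_ker_ne_bot_of_one_lt_finrank
      (by rw [hL ℓ (Finset.sdiff_subset hℓ)]; norm_num) f
  choose! w hwℓ hw0 using hw
  obtain ⟨g, hfg, hgw⟩ := exists_linearIndependent_pair_forall_apply_eq_zero hf
    (S := (L \ A).image w) (by
      have := Finset.card_image_le (s := L \ A) (f := w)
      rw [Finset.card_sdiff_of_subset hAL, hAcard] at this
      omega)
  refine ⟨f, g, hfg, fun ℓ hℓ => ?_⟩
  by_cases hℓA : ℓ ∈ A
  · rw [← inf_assoc, inf_eq_left.mpr (hAf ℓ hℓA)]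
    exact inf_ker_ne_bot_of_one_lt_finrank (by rw [hL ℓ hℓ]; norm_num) g
  · have hℓ' : ℓ ∈ L \ A := Finset.mem_sdiff.mpr ⟨hℓ, hℓA⟩
    obtain ⟨hwℓ', hwf⟩ := mem_inf.mp (hwℓ ℓ hℓ')
    exact (Submodule.ne_bot_iff _).mpr ⟨w ℓ, mem_inf.mpr ⟨hwℓ', hwf,
      LinearMap.mem_ker.mpr (hgw _ (Finset.mem_image_of_mem w hℓ'))⟩, hw0 ℓ hℓ'⟩

theorem inf_le_of_inf_ne_bot_of_not_le {ℓ W P : Submodule F V} (hℓ : finrank F ℓ ≤ 2)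
    (hℓW : ℓ ⊓ W ≠ ⊥) (hWP : W ≤ P) (hℓP : ¬ ℓ ≤ P) : ℓ ⊓ P ≤ W := by
  have hP : finrank F ↥(ℓ ⊓ P) < finrank F ℓ := finrank_lt_finrank_of_lt (inf_lt_left.mpr hℓP)
  have hW : 1 ≤ finrank F ↥(ℓ ⊓ W) := one_le_finrank_iff.mpr hℓW
  have : ℓ ⊓ W = ℓ ⊓ P := eq_of_le_of_finrank_le (inf_le_inf_left ℓ hWP) (by omega)
  exact this ▸ inf_le_right

theorem IsHyperplaneGenerating.exists_mem_le_not_le {L : Set (Submodule F V)}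
    (hgen : IsHyperplaneGenerating L) (hL : ∀ ℓ ∈ L, finrank F ℓ ≤ 2) {W P : Submodule F V}
    (hmeet : ∀ ℓ ∈ L, ℓ ⊓ W ≠ ⊥) (hP : finrank F P + 1 = finrank F V) (hWP : W ≤ P)
    (hPW : ¬ P ≤ W) : ∃ ℓ ∈ L, ℓ ≤ P ∧ ¬ ℓ ≤ W := by
  by_contra! h
  apply hPW
  rw [← hgen P hP, span_le, Set.iUnion₂_subset_iff]
  rintro ℓ hℓ x ⟨hxℓ, hxP⟩
  by_cases hℓP : ℓ ≤ P
  · exact h ℓ hℓ hℓP hxℓ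
  · exact inf_le_of_inf_ne_bot_of_not_le (hL ℓ hℓ) (hmeet ℓ hℓ) hWP hℓP ⟨hxℓ, hxP⟩

theorem IsHyperplaneGenerating.lift_mk_le_of_pencil {L : Set (Submodule F V)}
    (hgen : IsHyperplaneGenerating L) (hL : ∀ ℓ ∈ L, finrank F ℓ ≤ 2) {W : Submodule F V}
    (hmeet : ∀ ℓ ∈ L, ℓ ⊓ W ≠ ⊥) {ι : Type*} (P : ι → Submodule F V)
    (hP : ∀ i, finrank F (P i) + 1 = finrank F V) (hWP : ∀ i, W ≤ P i) (hPW : ∀ i, ¬ P i ≤ W)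
    (hPP : Pairwise fun i j => P i ⊓ P j ≤ W) :
    Cardinal.lift.{u} (Cardinal.mk ι) ≤ Cardinal.lift (Cardinal.mk L) := by
  choose ℓ hℓL hℓP hℓW using fun i => hgen.exists_mem_le_not_le hL hmeet (hP i) (hWP i) (hPW i)
  refine Cardinal.lift_mk_le_lift_mk_of_injective (f := fun i => (⟨ℓ i, hℓL i⟩ : L)) ?_
  intro i j hij
  by_contra hne
  have hℓij : ℓ i = ℓ j := congrArg Subtype.val hij
  exact hℓW i ((le_inf (hℓP i) (hℓij ▸ hℓP j)).trans (hPP hne))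

theorem IsHyperplaneGenerating.lift_mk_field_le {L : Set (Submodule F V)}
    (hgen : IsHyperplaneGenerating L) (hL : ∀ ℓ ∈ L, finrank F ℓ ≤ 2) {f g : Dual F V}
    (hfg : LinearIndependent F ![f, g]) (hmeet : ∀ ℓ ∈ L, ℓ ⊓ (ker f ⊓ ker g) ≠ ⊥) :
    Cardinal.lift.{u} (Cardinal.mk F) ≤ Cardinal.lift (Cardinal.mk L) :=
  hgen.lift_mk_le_of_pencil hL hmeet (fun a => ker (f + a • g))
    (fun a => Dual.finrank_ker_add_one_of_ne_zero (add_smul_ne_zero hfg a))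
    ker_inf_ker_le_ker_add_smul (not_ker_add_smul_le hfg)
    fun _ _ => ker_add_smul_inf_ker_add_smul_le

end FiniteDimensional

/-- Lower bound: if `F` has at least `⌊d/2⌋ + d` elements, then every generator set of
lines with respect to hyperplanes in `PG(d,F)` contains at least `⌊d/2⌋ + d` lines. -/
theorem generator_lower_bound (F : Type*) [Field F] (d : ℕ)
    (hF : ((d / 2 + d : ℕ) : Cardinal) ≤ Cardinal.mk F)
    (L : Set (Submodule F (Fin (d + 1) → F)))
    (hL : ∀ ℓ ∈ L, Module.finrank F ℓ = 2)
    (hgen : ∀ Pl : Submodule F (Fin (d + 1) → F), Module.finrank F Pl = d →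
      Submodule.span F (⋃ ℓ ∈ L, ((ℓ : Set (Fin (d + 1) → F)) ∩ (Pl : Set (Fin (d + 1) → F)))) = Pl) :
    ((d / 2 + d : ℕ) : Cardinal) ≤ Cardinal.mk L := by
  by_contra! hlt
  have hfin : L.Finite :=
    Cardinal.lt_aleph0_iff_set_finite.mp (hlt.trans Cardinal.natCast_lt_aleph0)
  have hV : finrank F (Fin (d + 1) → F) = d + 1 := finrank_fin_fun F
  obtain ⟨f, g, hfg, hmeet⟩ := exists_linearIndependent_pair_forall_inf_ne_bot
    (L := hfin.toFinset) hV (by simpa using hL) (by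
      rwa [← hfin.coe_toFinset, Finset.coe_sort_coe, Cardinal.mk_coe_finset, Nat.cast_lt] at hlt)
  have hgen' : IsHyperplaneGenerating L := fun P hP => hgen P (by omega)
  have hFL := hgen'.lift_mk_field_le (fun ℓ hℓ => (hL ℓ hℓ).le) hfg (by simpa using hmeet)
  rw [Cardinal.lift_le] at hFL
  exact (hlt.trans_le hF).not_ge hFL
end

section
/- Suppose char F = 0 or char F = p > d, and |F| ≥ 2d−1. Then there is no projective subspace of codimension two in PG(d,F) meeting every tangent line ℓ_t of the moment curve (t ∈ F). -/
/-!
A codimension-two subspace `H` is the common kernel of two independent functionals `φ, ψ`;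
restricted to the moment curve they become independent polynomials `P, Q` of degree `≤ d`.
A nonzero vector `α a(t) + β ȧ(t)` lies in `H` iff `(α, β)` is a common zero of
`α P(t) + β P'(t)` and `α Q(t) + β Q'(t)`, so `H` meets every tangent line iff the Wronskian
`P Q' - P' Q` vanishes on `F`. Its degree is at most `2d - 2 < |F|`, so it is zero. Dividing
out `gcd(P, Q)` leaves coprime polynomials with zero Wronskian, hence with zero derivatives;
as `1, …, d` are nonzero in `F` they are constants, so `P` and `Q` are proportional.
-/

/-- The tangent line of the moment curve `t ↦ (1, t, …, t^d)` at parameter `t`, i.e. the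
line spanned by `a(t) = (1, t, …, t^d)` and `ȧ(t) = (0, 1, 2t, …, d t^{d-1})`. -/
def momentTangent (F : Type*) [Field F] (d : ℕ) (t : F) :
    Submodule F (Fin (d + 1) → F) :=
  Submodule.span F
    {fun i : Fin (d + 1) => t ^ (i : ℕ), fun i : Fin (d + 1) => ((i : ℕ) : F) * t ^ ((i : ℕ) - 1)}

open Polynomial Module

theorem LinearMap.apply_eq_sum_smul_apply_single {R M ι : Type*} [CommSemiring R]
    [AddCommMonoid M] [Module R M] [Fintype ι] [DecidableEq ι] (f : (ι → R) →ₗ[R] M)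
    (x : ι → R) : f x = ∑ i, x i • f (Pi.single i 1) := by
  conv_lhs => rw [← (LinearEquiv.piRing R M ι R).symm_apply_apply f, LinearEquiv.piRing_symm_apply]
  rfl

theorem Submodule.exists_linearIndependent_pair_of_finrank_eq_two {K V : Type*} [Field K]
    [AddCommGroup V] [Module K V] {W : Submodule K V} (h : finrank K W = 2) :
    ∃ x ∈ W, ∃ y ∈ W, LinearIndependent K ![x, y] := by
  have : Nontrivial W := Module.nontrivial_of_finrank_pos (R := K) (by omega)
  obtain ⟨x, hx⟩ := exists_ne (0 : W)
  obtain ⟨y, hxy⟩ := exists_linearIndependent_pair_of_one_lt_finrank (R := K) (by omega) hx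
  refine ⟨x, x.2, y, y.2, LinearIndependent.pair_iff.mpr fun s t hst => ?_⟩
  exact LinearIndependent.pair_iff.mp hxy s t (Subtype.ext (by simpa using hst))

namespace Polynomial

theorem eq_C_of_derivative_eq_zero_of_natDegree_le {R : Type*} [Semiring R] [NoZeroDivisors R]
    {d : ℕ} (hcast : ∀ n : ℕ, 0 < n → n ≤ d → (n : R) ≠ 0) {p : R[X]} (hp : p.natDegree ≤ d)
    (h : derivative p = 0) : p = C (p.coeff 0) := by
  refine eq_C_of_natDegree_eq_zero (by_contra fun hne => ?_)
  obtain ⟨m, hm⟩ := Nat.exists_eq_add_one_of_ne_zero hne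
  have hc := coeff_derivative p m
  rw [h, coeff_zero, ← Nat.cast_add_one, ← hm, eq_comm, mul_eq_zero] at hc
  rcases hc with hc | hc
  · exact hne (by rw [leadingCoeff_eq_zero.mp hc, natDegree_zero])
  · exact hcast _ (Nat.pos_of_ne_zero hne) hp hc

theorem wronskian_mul_left {R : Type*} [CommRing R] (c a b : R[X]) :
    wronskian (c * a) (c * b) = c ^ 2 * wronskian a b := by
  simp only [wronskian, derivative_mul]
  ring

theorem not_linearIndependent_of_wronskian_eq_zero {F : Type*} [Field F] {d : ℕ}
    (hcast : ∀ n : ℕ, 0 < n → n ≤ d → (n : F) ≠ 0) {P Q : F[X]} (hP : P.natDegree ≤ d)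
    (hQ : Q.natDegree ≤ d) (hW : wronskian P Q = 0) : ¬ LinearIndependent F ![P, Q] := by
  classical
  intro hind
  have hP0 : P ≠ 0 := hind.ne_zero 0
  obtain ⟨P₁, Q₁, hPG, hQG, hunit⟩ := extract_gcd P Q
  set G := gcd P Q
  have hG : G ≠ 0 := fun h => hP0 ((gcd_eq_zero_iff P Q).mp h).1
  have hW₁ : wronskian P₁ Q₁ = 0 := by
    rw [hPG, hQG, wronskian_mul_left] at hW
    exact (mul_eq_zero.mp hW).resolve_left (pow_ne_zero 2 hG)
  obtain ⟨hP₁', hQ₁'⟩ := ((gcd_isUnit_iff P₁ Q₁).mp hunit).wronskian_eq_zero_iff.mp hW₁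
  have hP₁ : P₁ = C (P₁.coeff 0) := eq_C_of_derivative_eq_zero_of_natDegree_le hcast
    ((natDegree_le_of_dvd (Dvd.intro_left G hPG.symm) hP0).trans hP) hP₁'
  have hQ₁ : Q₁ = C (Q₁.coeff 0) := by
    by_cases hQ₁0 : Q₁ = 0
    · simp [hQ₁0]
    exact eq_C_of_derivative_eq_zero_of_natDegree_le hcast
      ((natDegree_le_of_dvd (Dvd.intro_left G hQG.symm) (by simp [hQG, hG, hQ₁0])).trans hQ) hQ₁'
  have hdep : Q₁.coeff 0 • P + -P₁.coeff 0 • Q = 0 := by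
    rw [hPG, hQG, hP₁, hQ₁]
    simp only [smul_eq_C_mul, map_neg, coeff_C_zero]
    ring
  have hcoeff := (LinearIndependent.pair_iff.mp hind _ _ hdep).2
  exact hP0 (by rw [hPG, hP₁, neg_eq_zero.mp hcoeff, C_0, mul_zero])

theorem natDegree_wronskian_le_of_natDegree_le_pred {R : Type*} [CommRing R] {d : ℕ}
    {P Q : R[X]} (hP : P.natDegree ≤ d) (hQ : Q.natDegree ≤ d - 1) :
    (wronskian P Q).natDegree ≤ 2 * d - 2 := by
  by_cases hW : wronskian P Q = 0
  · simp [hW]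
  have := natDegree_wronskian_lt_add hW
  omega

/-- Subtracting a multiple of `P` from `Q` kills the top coefficient of `Q` without changing
the Wronskian. -/
theorem natDegree_wronskian_le {F : Type*} [Field F] {d : ℕ} {P Q : F[X]}
    (hP : P.natDegree ≤ d) (hQ : Q.natDegree ≤ d) :
    (wronskian P Q).natDegree ≤ 2 * d - 2 := by
  have natDegree_le_pred {R : F[X]} (hR : R.natDegree ≤ d) (hRd : R.coeff d = 0) :
      R.natDegree ≤ d - 1 := by
    refine natDegree_le_iff_coeff_eq_zero.mpr fun m hm => ?_
    rcases (show m = d ∨ d < m by omega) with rfl | hlt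
    · exact hRd
    · exact coeff_eq_zero_of_natDegree_lt (by omega)
  by_cases hPd : P.coeff d = 0
  · rw [← wronskian_neg_eq, natDegree_neg]
    exact natDegree_wronskian_le_of_natDegree_le_pred hQ (natDegree_le_pred hP hPd)
  set Q' := Q - (Q.coeff d / P.coeff d) • P
  have hW : wronskian P Q' = wronskian P Q := by
    rw [← wronskianBilin_apply, map_sub, map_smul, wronskianBilin_apply, wronskianBilin_apply,
      wronskian_self_eq_zero, smul_zero, sub_zero]
  have hQ'd : Q'.coeff d = 0 := by
    rw [coeff_sub, coeff_smul, smul_eq_mul, div_mul_cancel₀ _ hPd, sub_self]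
  have hQ' : Q'.natDegree ≤ d :=
    (natDegree_sub_le _ _).trans (max_le hQ ((natDegree_smul_le _ _).trans hP))
  rw [← hW]
  exact natDegree_wronskian_le_of_natDegree_le_pred hP (natDegree_le_pred hQ' hQ'd)

end Polynomial

section MomentPolynomial

variable {F : Type*} [Field F] {d : ℕ}

variable (F d) in
/-- The polynomial `t ↦ φ (1, t, …, t^d)`. -/
noncomputable def momentPolynomial : Module.Dual F (Fin (d + 1) → F) →ₗ[F] F[X] where
  toFun φ := ∑ i : Fin (d + 1), φ (Pi.single i 1) • X ^ (i : ℕ)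
  map_add' φ ψ := by simp only [LinearMap.add_apply, add_smul, Finset.sum_add_distrib]
  map_smul' c φ := by simp only [LinearMap.smul_apply, smul_eq_mul, mul_smul, Finset.smul_sum,
    RingHom.id_apply]

theorem momentPolynomial_apply (φ : Module.Dual F (Fin (d + 1) → F)) :
    momentPolynomial F d φ = ∑ i : Fin (d + 1), φ (Pi.single i 1) • X ^ (i : ℕ) := rfl

theorem natDegree_momentPolynomial_le (φ : Module.Dual F (Fin (d + 1) → F)) :
    (momentPolynomial F d φ).natDegree ≤ d := by
  rw [momentPolynomial_apply]
  refine natDegree_sum_le_of_forall_le _ _ fun i _ => ?_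
  exact (natDegree_smul_le _ _).trans ((natDegree_X_pow_le _).trans (Nat.lt_succ_iff.mp i.isLt))

theorem coeff_momentPolynomial (φ : Module.Dual F (Fin (d + 1) → F)) (i : Fin (d + 1)) :
    (momentPolynomial F d φ).coeff i = φ (Pi.single i 1) := by
  rw [momentPolynomial_apply, finsetSum_coeff, Finset.sum_eq_single i]
  · simp
  · intro j _ hji
    simp [coeff_X_pow, Fin.val_injective.ne hji.symm]
  · simp

theorem momentPolynomial_injective : Function.Injective (momentPolynomial F d) := by
  refine (injective_iff_map_eq_zero _).mpr fun φ hφ => (Pi.basisFun F _).ext fun i => ?_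
  rw [Pi.basisFun_apply, ← coeff_momentPolynomial, hφ, coeff_zero, LinearMap.zero_apply]

theorem eval_momentPolynomial (φ : Module.Dual F (Fin (d + 1) → F)) (t : F) :
    (momentPolynomial F d φ).eval t = φ (fun i => t ^ (i : ℕ)) := by
  rw [φ.apply_eq_sum_smul_apply_single, momentPolynomial_apply, eval_finsetSum]
  simp [mul_comm]

theorem eval_derivative_momentPolynomial (φ : Module.Dual F (Fin (d + 1) → F)) (t : F) :
    (derivative (momentPolynomial F d φ)).eval t =
      φ (fun i => ((i : ℕ) : F) * t ^ ((i : ℕ) - 1)) := by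
  rw [φ.apply_eq_sum_smul_apply_single, momentPolynomial_apply, derivative_sum, eval_finsetSum]
  simp [derivative_X_pow, mul_comm]

open Matrix in
theorem eval_wronskian_momentPolynomial_eq_zero {H : Submodule F (Fin (d + 1) → F)}
    {φ ψ : Module.Dual F (Fin (d + 1) → F)} (hφ : φ ∈ H.dualAnnihilator)
    (hψ : ψ ∈ H.dualAnnihilator) {t : F} (ht : momentTangent F d t ⊓ H ≠ ⊥) :
    (wronskian (momentPolynomial F d φ) (momentPolynomial F d ψ)).eval t = 0 := by
  obtain ⟨v, hv, hv0⟩ := (Submodule.ne_bot_iff _).mp ht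
  obtain ⟨hvt, hvH⟩ := Submodule.mem_inf.mp hv
  obtain ⟨α, β, rfl⟩ := Submodule.mem_span_pair.mp hvt
  have hαβ : ![α, β] ≠ 0 := by
    intro h
    obtain ⟨rfl, rfl⟩ : α = 0 ∧ β = 0 := ⟨congr_fun h 0, congr_fun h 1⟩
    simp at hv0
  have hkernel : !![(momentPolynomial F d φ).eval t, (derivative (momentPolynomial F d φ)).eval t;
      (momentPolynomial F d ψ).eval t, (derivative (momentPolynomial F d ψ)).eval t] *ᵥ
      ![α, β] = 0 := by
    have hφv := (Submodule.mem_dualAnnihilator φ).mp hφ _ hvH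
    have hψv := (Submodule.mem_dualAnnihilator ψ).mp hψ _ hvH
    simp only [map_add, map_smul, smul_eq_mul] at hφv hψv
    ext i
    fin_cases i <;>
      simpa [eval_momentPolynomial, eval_derivative_momentPolynomial, mulVec, dotProduct,
        Fin.sum_univ_two, mul_comm]
  have hdet := Matrix.exists_mulVec_eq_zero_iff.mp ⟨_, hαβ, hkernel⟩
  rwa [Matrix.det_fin_two_of, ← eval_mul, ← eval_mul, ← eval_sub] at hdet

end MomentPolynomial

/-- If `char F = 0` or `char F = p > d`, and `|F| ≥ 2d - 1`, then no codimension-two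
subspace of `PG(d,F)` meets every tangent line of the moment curve. -/
theorem no_transversal_of_moment_tangents (F : Type*) [Field F] (d : ℕ)
    (hchar : CharP F 0 ∨ ∃ p : ℕ, p.Prime ∧ CharP F p ∧ d < p)
    (hF : ((2 * d - 1 : ℕ) : Cardinal) ≤ Cardinal.mk F) :
    ¬ ∃ H : Submodule F (Fin (d + 1) → F),
        Module.finrank F H = d - 1 ∧ ∀ t : F, momentTangent F d t ⊓ H ≠ ⊥ := by
  rintro ⟨H, hrank, hmeet⟩
  rcases Nat.eq_zero_or_pos d with rfl | hd
  · exact hmeet 0 (by rw [Submodule.finrank_eq_zero.mp hrank, inf_bot_eq])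
  have hcast : ∀ n : ℕ, 0 < n → n ≤ d → (n : F) ≠ 0 := by
    intro n hn hnd
    rcases hchar with hc | ⟨p, -, hc, hdp⟩
    · rw [Ne, CharP.cast_eq_zero_iff F 0]
      omega
    · rw [Ne, CharP.cast_eq_zero_iff F p]
      exact Nat.not_dvd_of_pos_of_lt hn (by omega)
  have hann : finrank F H.dualAnnihilator = 2 := by
    have := Subspace.finrank_add_finrank_dualAnnihilator_eq H
    rw [hrank, finrank_fin_fun] at this
    omega
  obtain ⟨φ, hφ, ψ, hψ, hind⟩ := Submodule.exists_linearIndependent_pair_of_finrank_eq_two hann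
  have hPQ : LinearIndependent F ![momentPolynomial F d φ, momentPolynomial F d ψ] := by
    rw [LinearIndependent.pair_iff] at hind ⊢
    intro s u h
    exact hind s u (momentPolynomial_injective (by rwa [map_add, map_smul, map_smul, map_zero]))
  have hW : wronskian (momentPolynomial F d φ) (momentPolynomial F d ψ) = 0 := by
    refine eq_zero_of_forall_eval_zero_of_natDegree_lt_card _
      (fun t => eval_wronskian_momentPolynomial_eq_zero hφ hψ (hmeet t)) (lt_of_lt_of_le ?_ hF)
    exact_mod_cast (natDegree_wronskian_le (natDegree_momentPolynomial_le _)
      (natDegree_momentPolynomial_le _)).trans_lt (by omega)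
  exact not_linearIndependent_of_wronskian_eq_zero hcast (natDegree_momentPolynomial_le _)
    (natDegree_momentPolynomial_le _) hW hPQ
end
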